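/- (Lemma 2.2) Let x, y be nonzero complex numbers, let 1 ≤ l ≤ min(m, n), and let Φ_l = ∑_{i=0}^{l} d_{i,l} v_{m-l+i} ⊗ w_{n-i} with d_{i,l} = (-1)^i q^{i(-m+2l-i-1)} ∏_{j=0}^{i} [m-l+j]_q / [n-j+1]_q. Then e_0 Φ_l = [m-l]_q q^{-1} (x q^n - y q^{-m+2l-2}) Φ_{l-1}, where e_0 acts on V_m ⊗ V_n by e_0(v ⊗ w) = q^{-1} x (f v) ⊗ (K^{-1} w) + q^{-1} y v ⊗ (f w). -/
import Mathlib


open scoped BigOperators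

/-- The `q`-integer `[r]_q = (q^r - q^{-r})/(q - q⁻¹)`. -/
noncomputable def qint (q : ℂ) (r : ℤ) : ℂ := (q ^ r - q ^ (-r)) / (q - q⁻¹)

/-- The `q`-factorial `[r]_q! = ∏_{s=1}^r [s]_q`. -/
noncomputable def qfact (q : ℂ) (r : ℕ) : ℂ := ∏ s ∈ Finset.range r, qint q ((s : ℤ) + 1)

/-- The `q`-binomial coefficient `[r choose s]_q`. -/
noncomputable def qbinom (q : ℂ) (r s : ℕ) : ℂ := qfact q r / (qfact q s * qfact q (r - s))

/-- `q` is not a root of unity. -/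
def NotRootOfUnity (q : ℂ) : Prop := ∀ k : ℕ, 0 < k → q ^ k ≠ 1

/-- The underlying space of `V_m ⊗ V_n` in terms of the coefficients with respect to the
basis `v_i ⊗ w_j`, `0 ≤ i ≤ m`, `0 ≤ j ≤ n`. -/
abbrev W (m n : ℕ) := Fin (m + 1) → Fin (n + 1) → ℂ

/-- Extension of a coefficient array to all of `ℕ × ℕ`, zero out of range. -/
noncomputable def uext {m n : ℕ} (u : W m n) (a b : ℕ) : ℂ :=
  if h : a ≤ m ∧ b ≤ n then u ⟨a, by omega⟩ ⟨b, by omega⟩ else 0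

/-- The basis vector `v_i ⊗ w_j` of `V_m ⊗ V_n`. -/
def basisW (m n i j : ℕ) : W m n := fun a b => if (a : ℕ) = i ∧ (b : ℕ) = j then 1 else 0

/-- Action of `e` on `V_m ⊗ V_n`: `e (v ⊗ w) = e v ⊗ K w + v ⊗ e w`, where on `V_m`
`e v_i = [m+1-i]_q v_{i-1}` and `K v_i = q^{m-2i} v_i`. -/
noncomputable def eT (q : ℂ) (m n : ℕ) (u : W m n) : W m n := fun a b =>
  qint q ((m : ℤ) - ((a : ℕ) : ℤ)) * q ^ ((n : ℤ) - 2 * ((b : ℕ) : ℤ)) *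
      uext u ((a : ℕ) + 1) (b : ℕ)
    + qint q ((n : ℤ) - ((b : ℕ) : ℤ)) * uext u (a : ℕ) ((b : ℕ) + 1)

/-- Action of `f` on `V_m ⊗ V_n`: `f (v ⊗ w) = f v ⊗ w + K⁻¹ v ⊗ f w`, where on `V_m`
`f v_i = [i+1]_q v_{i+1}` and `K⁻¹ v_i = q^{-(m-2i)} v_i`. -/
noncomputable def fT (q : ℂ) (m n : ℕ) (u : W m n) : W m n := fun a b =>
  qint q ((a : ℕ) : ℤ) * uext u ((a : ℕ) - 1) (b : ℕ)
    + q ^ (-((m : ℤ) - 2 * ((a : ℕ) : ℤ))) * qint q ((b : ℕ) : ℤ) *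
        uext u (a : ℕ) ((b : ℕ) - 1)

/-- Action of `K` on `V_m ⊗ V_n`: `K (v ⊗ w) = K v ⊗ K w`. -/
noncomputable def KT (q : ℂ) (m n : ℕ) (u : W m n) : W m n := fun a b =>
  q ^ ((m : ℤ) - 2 * ((a : ℕ) : ℤ)) * q ^ ((n : ℤ) - 2 * ((b : ℕ) : ℤ)) * u a b

/-- Action of `e₀` on the evaluation module `V_m(x) ⊗ V_n(y)`:
`e₀ (v ⊗ w) = q⁻¹ x (f v) ⊗ (K⁻¹ w) + q⁻¹ y v ⊗ (f w)`. -/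
noncomputable def e0T (q x y : ℂ) (m n : ℕ) (u : W m n) : W m n := fun a b =>
  q⁻¹ * x * qint q ((a : ℕ) : ℤ) * q ^ (-((n : ℤ) - 2 * ((b : ℕ) : ℤ))) *
      uext u ((a : ℕ) - 1) (b : ℕ)
    + q⁻¹ * y * qint q ((b : ℕ) : ℤ) * uext u (a : ℕ) ((b : ℕ) - 1)

/-- Action of `f₀` on the evaluation module `V_m(x) ⊗ V_n(y)`:
`f₀ (v ⊗ w) = q x⁻¹ (e v) ⊗ w + q y⁻¹ (K v) ⊗ (e w)`. -/
noncomputable def f0T (q x y : ℂ) (m n : ℕ) (u : W m n) : W m n := fun a b =>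
  q * x⁻¹ * qint q ((m : ℤ) - ((a : ℕ) : ℤ)) * uext u ((a : ℕ) + 1) (b : ℕ)
    + q * y⁻¹ * q ^ ((m : ℤ) - 2 * ((a : ℕ) : ℤ)) * qint q ((n : ℤ) - ((b : ℕ) : ℤ)) *
        uext u (a : ℕ) ((b : ℕ) + 1)

/-- The coefficient `c_{i,l-i} = (-1)^i q^{i(2l-n-i-1)} ∏_{j=0}^i [n-l+j]_q/[m-j+1]_q`. -/
noncomputable def cOmega (q : ℂ) (m n l i : ℕ) : ℂ :=
  (-1 : ℂ) ^ i * q ^ ((i : ℤ) * (2 * (l : ℤ) - (n : ℤ) - (i : ℤ) - 1)) *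
    ∏ j ∈ Finset.range (i + 1),
      qint q ((n : ℤ) - (l : ℤ) + (j : ℤ)) / qint q ((m : ℤ) - (j : ℤ) + 1)

/-- The highest weight vector `Ω_l = ∑_{i=0}^l c_{i,l-i} v_i ⊗ w_{l-i}`. -/
noncomputable def Omega (q : ℂ) (m n l : ℕ) : W m n :=
  ∑ i ∈ Finset.range (l + 1), cOmega q m n l i • basisW m n i (l - i)

/-- The coefficient `d_{i,l} = (-1)^i q^{i(-m+2l-i-1)} ∏_{j=0}^i [m-l+j]_q/[n-j+1]_q`. -/
noncomputable def dPhi (q : ℂ) (m n l i : ℕ) : ℂ :=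
  (-1 : ℂ) ^ i * q ^ ((i : ℤ) * (-(m : ℤ) + 2 * (l : ℤ) - (i : ℤ) - 1)) *
    ∏ j ∈ Finset.range (i + 1),
      qint q ((m : ℤ) - (l : ℤ) + (j : ℤ)) / qint q ((n : ℤ) - (j : ℤ) + 1)

/-- The lowest weight vector `Φ_l = ∑_{i=0}^l d_{i,l} v_{m-l+i} ⊗ w_{n-i}`. -/
noncomputable def Phi (q : ℂ) (m n l : ℕ) : W m n :=
  ∑ i ∈ Finset.range (l + 1), dPhi q m n l i • basisW m n (m - l + i) (n - i)
lemma qint_zero (q : ℂ) : qint q 0 = 0 := by simp [qint]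

lemma qint_ne_zero (q : ℂ) (hq : q ≠ 0) (hq' : NotRootOfUnity q) {r : ℤ} (hr : 0 < r) :
    qint q r ≠ 0 := by
  have hden : q - q⁻¹ ≠ 0 := by
    intro h
    have h' : q * q - 1 = 0 := by field_simp at h; linear_combination h
    have h2 : q ^ (2:ℕ) = 1 := by rw [pow_two]; linear_combination h'
    exact hq' 2 (by norm_num) h2
  have hnum : q ^ r - q ^ (-r) ≠ 0 := by
    intro h
    have h1 : q ^ r = q ^ (-r) := by linear_combination h
    have h2 : q ^ (2 * r) = 1 := by
      have : q ^ r * q ^ r = q ^ (-r) * q ^ r := by rw [h1]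
      rw [← zpow_add₀ hq, ← zpow_add₀ hq] at this
      simpa [two_mul] using this
    have h3 : q ^ ((2 * r).toNat) = 1 := by
      rw [← zpow_natCast, Int.toNat_of_nonneg (by omega)]
      exact h2
    exact hq' (2 * r).toNat (by omega) h3
  exact div_ne_zero hnum hden

lemma tele (F G : ℕ → ℂ) (i : ℕ) :
    F (i + 1) * ∏ j ∈ Finset.range (i + 1), F j / G j
      = F 0 * ∏ j ∈ Finset.range (i + 1), F (j + 1) / G j := by
  induction i with
  | zero => simp [Finset.prod_range_one]; ring
  | succ i ih =>
      rw [Finset.prod_range_succ (fun j => F j / G j) (i + 1),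
        Finset.prod_range_succ (fun j => F (j + 1) / G j) (i + 1)]
      linear_combination (F (i + 1 + 1) / G (i + 1)) * ih
lemma identB (q : ℂ) (hq : q ≠ 0) (m n l i : ℕ) (hl1 : 1 ≤ l) :
    qint q ((m:ℤ) - l + 1 + i) * q ^ ((n:ℤ) - 2 * i) * dPhi q m n l i
      = q ^ (n:ℤ) * qint q ((m:ℤ) - l) * dPhi q m n (l - 1) i := by
  have hc : ((l - 1 : ℕ) : ℤ) = (l : ℤ) - 1 := by omega
  have hprod := tele (fun j => qint q ((m:ℤ) - l + j)) (fun j => qint q ((n:ℤ) - j + 1)) i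
  simp only [Nat.cast_add, Nat.cast_one, Nat.cast_zero] at hprod
  rw [show (m:ℤ) - l + ((i:ℤ) + 1) = (m:ℤ) - l + 1 + i from by ring,
      show (m:ℤ) - l + 0 = (m:ℤ) - l from by ring] at hprod
  have harg : ∀ j : ℕ, qint q ((m:ℤ) - l + ((j:ℤ) + 1)) = qint q ((m:ℤ) - ((l:ℤ) - 1) + j) :=
    fun j => by rw [show (m:ℤ) - l + ((j:ℤ) + 1) = (m:ℤ) - ((l:ℤ) - 1) + j from by ring]
  simp only [harg] at hprod
  simp only [dPhi, hc]
  have hpow : q ^ ((n:ℤ) - 2 * i) * q ^ ((i:ℤ) * (-(m:ℤ) + 2 * l - i - 1))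
      = q ^ ((n:ℤ)) * q ^ ((i:ℤ) * (-(m:ℤ) + 2 * ((l:ℤ) - 1) - i - 1)) := by
    rw [← zpow_add₀ hq, ← zpow_add₀ hq]; congr 1; ring
  linear_combination ((-1:ℂ)^i * q ^ ((i:ℤ) * (-(m:ℤ) + 2 * l - i - 1)) * q ^ ((n:ℤ) - 2 * i)) * hprod
    + ((-1:ℂ)^i * qint q ((m:ℤ) - l)
        * ∏ j ∈ Finset.range (i+1), qint q ((m:ℤ) - ((l:ℤ) - 1) + j) / qint q ((n:ℤ) - j + 1)) * hpow
lemma identC (q : ℂ) (hq : q ≠ 0) (hq' : NotRootOfUnity q) (m n l i : ℕ)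
    (hl1 : 1 ≤ l) (hil : i + 1 ≤ l) (hln : l ≤ n) :
    qint q ((n:ℤ) - i) * dPhi q m n l (i + 1)
      = -(q ^ (-(m:ℤ) + 2 * l - 2)) * qint q ((m:ℤ) - l) * dPhi q m n (l - 1) i := by
  have hc : ((l - 1 : ℕ) : ℤ) = (l : ℤ) - 1 := by omega
  have hprod := tele (fun j => qint q ((m:ℤ) - l + j)) (fun j => qint q ((n:ℤ) - j + 1)) i
  simp only [Nat.cast_add, Nat.cast_one, Nat.cast_zero] at hprod
  rw [show (m:ℤ) - l + ((i:ℤ) + 1) = (m:ℤ) - l + 1 + i from by ring,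
      show (m:ℤ) - l + 0 = (m:ℤ) - l from by ring] at hprod
  have harg : ∀ j : ℕ, qint q ((m:ℤ) - l + ((j:ℤ) + 1)) = qint q ((m:ℤ) - ((l:ℤ) - 1) + j) :=
    fun j => by rw [show (m:ℤ) - l + ((j:ℤ) + 1) = (m:ℤ) - ((l:ℤ) - 1) + j from by ring]
  simp only [harg] at hprod
  simp only [dPhi, hc]
  rw [Finset.prod_range_succ]
  push_cast
  rw [show (m:ℤ) - l + ((i:ℤ) + 1) = (m:ℤ) - l + 1 + i from by ring,
      show (n:ℤ) - ((i:ℤ) + 1) + 1 = (n:ℤ) - i from by ring]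
  have hne : qint q ((n:ℤ) - i) ≠ 0 := qint_ne_zero q hq hq' (by omega)
  have hcanc : qint q ((n:ℤ) - i) * (qint q ((m:ℤ) - l + 1 + i) / qint q ((n:ℤ) - i))
      = qint q ((m:ℤ) - l + 1 + i) := by field_simp
  have hpow : q ^ (((i:ℤ) + 1) * (-(m:ℤ) + 2 * l - ((i:ℤ) + 1) - 1))
      = q ^ (-(m:ℤ) + 2 * l - 2) * q ^ ((i:ℤ) * (-(m:ℤ) + 2 * ((l:ℤ) - 1) - i - 1)) := by
    rw [← zpow_add₀ hq]; congr 1; ring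
  linear_combination
    (-(-1:ℂ)^i * q ^ (((i:ℤ) + 1) * (-(m:ℤ) + 2 * l - ((i:ℤ) + 1) - 1))
        * ∏ j ∈ Finset.range (i+1), qint q ((m:ℤ) - l + j) / qint q ((n:ℤ) - j + 1)) * hcanc
    + (-(-1:ℂ)^i * q ^ (((i:ℤ) + 1) * (-(m:ℤ) + 2 * l - ((i:ℤ) + 1) - 1))) * hprod
    + (-(-1:ℂ)^i * qint q ((m:ℤ) - l)
        * ∏ j ∈ Finset.range (i+1), qint q ((m:ℤ) - ((l:ℤ) - 1) + j) / qint q ((n:ℤ) - j + 1)) * hpow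
lemma phi_coeff (q : ℂ) (m n l : ℕ) (hlm : l ≤ m) (hln : l ≤ n) (a b : ℕ)
    (ha : a ≤ m) (hb : b ≤ n) :
    uext (Phi q m n l) a b
      = if m - l ≤ a ∧ a + b + l = m + n then dPhi q m n l (a - (m - l)) else 0 := by
  rw [uext, dif_pos ⟨ha, hb⟩]
  simp only [Phi, Finset.sum_apply, Pi.smul_apply, basisW, smul_eq_mul]
  split_ifs with h
  · obtain ⟨h1, h2⟩ := h
    rw [Finset.sum_eq_single (a - (m - l))]
    · rw [if_pos ⟨by omega, by omega⟩, mul_one]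
    · intro i hi hne
      rw [if_neg, mul_zero]
      rintro ⟨e1, e2⟩
      exact hne (by omega)
    · intro hmem
      exact absurd (Finset.mem_range.mpr (by omega)) hmem
  · apply Finset.sum_eq_zero
    intro i hi
    have hi' := Finset.mem_range.mp hi
    rw [if_neg, mul_zero]
    rintro ⟨e1, e2⟩
    exact h ⟨by omega, by omega⟩

/-- Lemma 2.2: for `1 ≤ l ≤ min(m,n)`,
`e₀ Φ_l = [m-l]_q q⁻¹ (x q^n - y q^{-m+2l-2}) Φ_{l-1}`. -/
theorem lemma22 (q : ℂ) (hq : q ≠ 0) (hq' : NotRootOfUnity q)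
    (x y : ℂ) (hx : x ≠ 0) (hy : y ≠ 0)
    (m n l : ℕ) (hl1 : 1 ≤ l) (hl : l ≤ min m n) :
    e0T q x y m n (Phi q m n l)
      = (qint q ((m : ℤ) - (l : ℤ)) * q⁻¹ *
          (x * q ^ (n : ℤ) - y * q ^ (-(m : ℤ) + 2 * (l : ℤ) - 2))) • Phi q m n (l - 1) := by
  have hlm : l ≤ m := le_trans hl (min_le_left m n)
  have hln : l ≤ n := le_trans hl (min_le_right m n)
  funext a b
  have ha : (a : ℕ) ≤ m := by have := a.isLt; omega
  have hb : (b : ℕ) ≤ n := by have := b.isLt; omega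
  have hP : Phi q m n (l - 1) a b = uext (Phi q m n (l - 1)) (a : ℕ) (b : ℕ) := by
    simp [uext, ha, hb]
  simp only [e0T, Pi.smul_apply, smul_eq_mul, hP]
  rw [phi_coeff q m n l hlm hln ((a : ℕ) - 1) (b : ℕ) (by omega) hb,
      phi_coeff q m n l hlm hln (a : ℕ) ((b : ℕ) - 1) ha (by omega),
      phi_coeff q m n (l - 1) (by omega) (by omega) (a : ℕ) (b : ℕ) ha hb]
  by_cases hS : m - l + 1 ≤ (a : ℕ) ∧ (a : ℕ) + (b : ℕ) + l = m + n + 1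
  · have hc1 : m - l ≤ (a : ℕ) - 1 ∧ ((a : ℕ) - 1) + (b : ℕ) + l = m + n := by omega
    have hc2 : m - l ≤ (a : ℕ) ∧ (a : ℕ) + ((b : ℕ) - 1) + l = m + n := by omega
    have hc3 : m - (l - 1) ≤ (a : ℕ) ∧ (a : ℕ) + (b : ℕ) + (l - 1) = m + n := by omega
    rw [if_pos hc1, if_pos hc2, if_pos hc3]
    set i := (a : ℕ) - 1 - (m - l) with hi
    rw [show (a : ℕ) - (m - l) = i + 1 from by omega,
        show (a : ℕ) - (m - (l - 1)) = i from by omega,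
        show (((a : ℕ) : ℤ)) = (m : ℤ) - l + 1 + i from by omega,
        show (((b : ℕ) : ℤ)) = (n : ℤ) - i from by omega,
        show -((n : ℤ) - 2 * ((n : ℤ) - (i : ℤ))) = (n : ℤ) - 2 * i from by ring]
    have hB := identB q hq m n l i hl1
    have hC := identC q hq hq' m n l i hl1 (by omega) hln
    linear_combination q⁻¹ * x * hB + q⁻¹ * y * hC
  · have hc3 : ¬(m - (l - 1) ≤ (a : ℕ) ∧ (a : ℕ) + (b : ℕ) + (l - 1) = m + n) := by omega
    rw [if_neg hc3, mul_zero]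
    rcases Nat.eq_zero_or_pos (a : ℕ) with h0 | h0
    · rw [show (((a : ℕ) : ℤ)) = 0 from by omega, qint_zero]
      rcases Nat.eq_zero_or_pos (b : ℕ) with h0' | h0'
      · rw [show (((b : ℕ) : ℤ)) = 0 from by omega, qint_zero]; ring
      · have hc2 : ¬(m - l ≤ (a : ℕ) ∧ (a : ℕ) + ((b : ℕ) - 1) + l = m + n) := by omega
        rw [if_neg hc2]; ring
    · have hc1 : ¬(m - l ≤ (a : ℕ) - 1 ∧ ((a : ℕ) - 1) + (b : ℕ) + l = m + n) := by omega
      rw [if_neg hc1]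
      rcases Nat.eq_zero_or_pos (b : ℕ) with h0' | h0'
      · rw [show (((b : ℕ) : ℤ)) = 0 from by omega, qint_zero]; ring
      · have hc2 : ¬(m - l ≤ (a : ℕ) ∧ (a : ℕ) + ((b : ℕ) - 1) + l = m + n) := by omega
        rw [if_neg hc2]; ring
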